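/- Consider a mass-action system whose forward solutions from positive initial conditions are bounded. Suppose that for every semi-locking set I there exists α ∈ ℝ^m with α_i < 0 for i ∈ I and α_i = 0 for i ∉ I, such that for every compact subset K of L_I there exists a neighbourhood U of K in ℝ^m_{≥0} with ⟨α, Γ R(x)⟩ ≤ 0 for all x ∈ U. Then the system is persistent: for every x₀ ∈ ℝ^m_{>0}, ω(x₀) ∩ ∂ℝ^m_{>0} = ∅. -/

import Mathlib

open scoped BigOperators
open Matrix Filter

/-- The stoichiometric matrix `Γ ∈ ℝ^{m×r}`, `Γ j i = β i j - α i j`. -/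
noncomputable def Gamma {m r : ℕ} (a b : Fin r → Fin m → ℕ) : Matrix (Fin m) (Fin r) ℝ :=
  fun j i => (b i j : ℝ) - (a i j : ℝ)

/-- Mass-action reaction rates `R_i(x) = k_i ∏_j x_j^{α_{ij}}`. -/
noncomputable def rate {m r : ℕ} (a : Fin r → Fin m → ℕ) (k : Fin r → ℝ)
    (x : Fin m → ℝ) : Fin r → ℝ :=
  fun i => k i * ∏ j, x j ^ (a i j)

/-- A nonempty `I` is a semi-locking set (siphon) if every reaction producing a species
in `I` consumes a species in `I`. -/
def IsSemiLocking {m r : ℕ} (a b : Fin r → Fin m → ℕ) (I : Set (Fin m)) : Prop :=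
  I.Nonempty ∧ ∀ i : Fin r, (∃ j ∈ I, 0 < b i j) → ∃ l ∈ I, 0 < a i l

/-- A nonempty `I` is a locking set (deadlock) if every reaction consumes a species in `I`. -/
def IsLocking {m r : ℕ} (a : Fin r → Fin m → ℕ) (I : Set (Fin m)) : Prop :=
  I.Nonempty ∧ ∀ i : Fin r, ∃ l ∈ I, 0 < a i l

/-- `L_I = {x ∈ ℝ^m_{≥0} : x_i = 0 for i ∈ I, x_i > 0 for i ∉ I}`. -/
def LI {m : ℕ} (I : Set (Fin m)) : Set (Fin m → ℝ) :=
  {x | (∀ i, 0 ≤ x i) ∧ (∀ i ∈ I, x i = 0) ∧ ∀ i ∉ I, 0 < x i}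

/-- Boundary of the positive orthant of `ℝ^m`. -/
def posBoundary (m : ℕ) : Set (Fin m → ℝ) :=
  {x | (∀ i, 0 ≤ x i) ∧ ∃ i, x i = 0}

/-- The stoichiometric subspace `S = range Γ`. -/
noncomputable def stoichSubspace {m r : ℕ} (a b : Fin r → Fin m → ℕ) :
    Submodule ℝ (Fin m → ℝ) :=
  LinearMap.range (Gamma a b).mulVecLin

/-- The positive stoichiometric compatibility class `C_{x₀} = (x₀ + S) ∩ ℝ^m_{>0}`. -/
def compatClass {m r : ℕ} (a b : Fin r → Fin m → ℕ) (x₀ : Fin m → ℝ) :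
    Set (Fin m → ℝ) :=
  {x | (∀ i, 0 < x i) ∧ x - x₀ ∈ stoichSubspace a b}

/-- `F_I = closure(C_{x₀}) ∩ L_I`. -/
def FI {m r : ℕ} (a b : Fin r → Fin m → ℕ) (x₀ : Fin m → ℝ) (I : Set (Fin m)) :
    Set (Fin m → ℝ) :=
  closure (compatClass a b x₀) ∩ LI I

/-- The dimension of the affine hull of a set in `ℝ^m`. -/
noncomputable def setDim {m : ℕ} (F : Set (Fin m → ℝ)) : ℕ :=
  Module.finrank ℝ (affineSpan ℝ F).direction

/-- `F` is a facet of a compatibility class: nonempty with affine-hull dimension `s - 1`,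
where `s = rank Γ`. -/
def IsFacet {m r : ℕ} (a b : Fin r → Fin m → ℕ) (F : Set (Fin m → ℝ)) : Prop :=
  F.Nonempty ∧ setDim F = (Gamma a b).rank - 1

/-- `F` is a vertex: nonempty with affine-hull dimension `0`. -/
def IsVertex {m : ℕ} (F : Set (Fin m → ℝ)) : Prop :=
  F.Nonempty ∧ setDim F = 0

/-- A global forward solution of the mass-action system `ẋ = Γ R(x)`. -/
def IsForwardSolution {m r : ℕ} (a b : Fin r → Fin m → ℕ) (k : Fin r → ℝ)
    (x : ℝ → Fin m → ℝ) : Prop :=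
  ∀ t : ℝ, 0 ≤ t → HasDerivAt x ((Gamma a b).mulVec (rate a k (x t))) t

/-- The ω-limit set of a forward trajectory. -/
def omegaLimitSet {m : ℕ} (x : ℝ → Fin m → ℝ) : Set (Fin m → ℝ) :=
  {y | MapClusterPt y atTop x}

/-- `R_i ≼_I R_j` : `α i l ≥ α j l` for all `l ∈ I`, strict for some `l ∈ I`. -/
def prec {m r : ℕ} (a : Fin r → Fin m → ℕ) (I : Set (Fin m)) (i j : Fin r) : Prop :=
  (∀ l ∈ I, a j l ≤ a i l) ∧ ∃ l ∈ I, a j l < a i l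

/-- `R_I = {(i,j) : R_i ≼_I R_j}`. -/
def precSet {m r : ℕ} (a : Fin r → Fin m → ℕ) (I : Set (Fin m)) : Set (Fin r × Fin r) :=
  {p | prec a I p.1 p.2}

/-- The feasibility cone relative to `J`. -/
def feasCone {r : ℕ} (J : Set (Fin r × Fin r)) (ε : ℝ) : Set (Fin r → ℝ) :=
  {v | (∀ i, 0 ≤ v i) ∧ ∀ p ∈ J, v p.1 ≤ ε * v p.2}

/-- The criticality cone `C(I)`. -/
def critCone {m r : ℕ} (a b : Fin r → Fin m → ℕ) (I : Set (Fin m)) : Set (Fin r → ℝ) :=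
  {v | (∀ i, 0 ≤ v i) ∧ ∀ l ∈ I, (Gamma a b).mulVec v l ≤ 0}

/-- `ker(I,J,ε)`. -/
def kerIJ {m r : ℕ} (a b : Fin r → Fin m → ℕ) (I : Set (Fin m))
    (J : Set (Fin r × Fin r)) (ε : ℝ) : Set (Fin r → ℝ) :=
  {v | (∀ i, 0 ≤ v i) ∧ (∀ l ∈ I, (Gamma a b).mulVec v l = 0) ∧ ∀ p ∈ J, v p.1 = ε * v p.2}

/-- Dynamical non-emptiability (Angeli–De Leenheer–Sontag): `F_ε(I) ∩ C(I) = {0}`. -/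
def DynNonEmptiable {m r : ℕ} (a b : Fin r → Fin m → ℕ) (I : Set (Fin m)) : Prop :=
  ∃ ε > (0:ℝ), critCone a b I ∩ feasCone (precSet a I) ε = {0}

/-- Weak dynamical non-emptiability: `C(I) ∩ F_ε(J) ⊆ ker(I,J,ε)` for some `ε > 0`, `J ⊆ R_I`. -/
def WeaklyDynNonEmptiable {m r : ℕ} (a b : Fin r → Fin m → ℕ) (I : Set (Fin m)) : Prop :=
  ∃ ε > (0:ℝ), ∃ J ⊆ precSet a I, critCone a b I ∩ feasCone J ε ⊆ kerIJ a b I J ε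

/-- `I` contains the support of a semi-conservation vector. -/
def ContainsSemiConsSupport {m r : ℕ} (a b : Fin r → Fin m → ℕ) (I : Set (Fin m)) : Prop :=
  ∃ c : Fin m → ℝ, (∀ i, 0 ≤ c i) ∧ (∃ i, 0 < c i) ∧
    Matrix.vecMul c (Gamma a b) = 0 ∧ ∀ i, 0 < c i → i ∈ I

/-- A semi-locking set is critical if it contains no support of a semi-conservation vector. -/
def IsCritical {m r : ℕ} (a b : Fin r → Fin m → ℕ) (I : Set (Fin m)) : Prop :=
  ¬ ContainsSemiConsSupport a b I

/-- Weak reversibility: in the directed reaction graph on complexes, the reactant complex of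
every reaction is reachable from its product complex (equivalently, every connected
component is strongly connected). -/
def WeaklyReversible {m r : ℕ} (a b : Fin r → Fin m → ℕ) : Prop :=
  ∀ i : Fin r,
    Relation.ReflTransGen (fun y z : Fin m → ℕ => ∃ i', a i' = y ∧ b i' = z) (b i) (a i)

/-- The system is conservative: `cᵀ Γ = 0` for some strictly positive `c`. -/
def Conservative {m r : ℕ} (a b : Fin r → Fin m → ℕ) : Prop :=
  ∃ c : Fin m → ℝ, (∀ i, 0 < c i) ∧ Matrix.vecMul c (Gamma a b) = 0


/-!
Positive solutions stay positive, since the consumption rate of a species is `O(x_l)` on bounded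
sets. Along a bounded positive solution the ω-limit set `Ω` is compact and attracts the
trajectory. If `Ω` met the boundary, pick `y ∈ Ω` whose zero set `I` is maximal. Then `I` is
semi-locking: a reaction producing a species of `I` without consuming any would push that
coordinate up at a definite rate near `y`, so `y` could not be approached. By maximality
`Ω ∩ {z_I = 0} ⊆ L_I`, so the hypothesis yields an open `U ⊇ Ω ∩ {z_I = 0}` on which
`V z = ⟨α, z⟩` is nonincreasing along the flow. `V` is negative on the trajectory and on `Ω \ U`,
so for some `c < 0` the trajectory eventually stays in `U ∪ {V < c}`; it then cannot climb above
a negative level of `V`, which contradicts `V y = 0`.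
-/

open Set Topology Metric

section MassAction

variable {m r : ℕ} (a b : Fin r → Fin m → ℕ) (k : Fin r → ℝ)

lemma Gamma_mulVec_apply (v : Fin r → ℝ) (l : Fin m) :
    (Gamma a b *ᵥ v) l = ∑ i, ((b i l : ℝ) - a i l) * v i :=
  rfl

lemma continuous_rate : Continuous (rate a k) :=
  continuous_pi fun _ => continuous_const.mul
    (continuous_finsetProd _ fun j _ => (continuous_apply j).pow _)

lemma continuous_Gamma_mulVec_rate : Continuous fun z => Gamma a b *ᵥ rate a k z :=
  (Gamma a b).mulVecLin.continuous_of_finiteDimensional.comp (continuous_rate a k)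

variable {a k}

lemma rate_nonneg (hk : ∀ i, 0 ≤ k i) {z : Fin m → ℝ} (hz : ∀ j, 0 ≤ z j) (i : Fin r) :
    0 ≤ rate a k z i :=
  mul_nonneg (hk i) (Finset.prod_nonneg fun j _ => pow_nonneg (hz j) _)

lemma rate_eq_zero_of_consumed {z : Fin m → ℝ} {i : Fin r} {j : Fin m} (hzj : z j = 0)
    (hij : 0 < a i j) : rate a k z i = 0 := by
  simp only [rate, mul_eq_zero]
  exact Or.inr (Finset.prod_eq_zero (Finset.mem_univ j) (by simp [hzj, hij.ne']))

lemma rate_pos (hk : ∀ i, 0 < k i) {z : Fin m → ℝ} (hz : ∀ j, 0 ≤ z j) {i : Fin r}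
    (hi : ∀ j, z j = 0 → a i j = 0) : 0 < rate a k z i := by
  refine mul_pos (hk i) (Finset.prod_pos fun j _ => ?_)
  rcases (hz j).eq_or_lt with hzj | hzj
  · simp [hi j hzj.symm]
  · exact pow_pos hzj _

lemma prod_pow_le_mul_pow {ι : Type*} [Fintype ι] [DecidableEq ι] {z : ι → ℝ} {e : ι → ℕ}
    {M : ℝ} (hM : 1 ≤ M) (hz : ∀ j, 0 ≤ z j) (hzM : ∀ j, z j ≤ M) {l : ι} (hl : 0 < e l) :
    ∏ j, z j ^ e j ≤ z l * M ^ ∑ j, e j := by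
  have hpow : ∀ s : Finset ι, ∏ j ∈ s, z j ^ e j ≤ M ^ ∑ j ∈ s, e j := fun s => by
    rw [← Finset.prod_pow_eq_pow_sum]
    exact Finset.prod_le_prod (fun j _ => pow_nonneg (hz j) _)
      fun j _ => pow_le_pow_left₀ (hz j) (hzM j) _
  obtain ⟨n, hn⟩ := Nat.exists_eq_add_one_of_ne_zero hl.ne'
  have hsum := Finset.add_sum_erase Finset.univ e (Finset.mem_univ l)
  calc ∏ j, z j ^ e j = z l * (z l ^ n * ∏ j ∈ Finset.univ.erase l, z j ^ e j) := by
        rw [← Finset.mul_prod_erase _ _ (Finset.mem_univ l), hn, pow_succ']; ring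
    _ ≤ z l * (M ^ n * M ^ ∑ j ∈ Finset.univ.erase l, e j) := by
        gcongr
        · exact hz l
        · exact Finset.prod_nonneg fun j _ => pow_nonneg (hz j) _
        · exact hz l
        · exact hzM l
        · exact hpow _
    _ ≤ z l * M ^ ∑ j, e j := by
        rw [← pow_add]
        gcongr
        · exact hz l
        · omega

lemma neg_mul_le_Gamma_mulVec_rate (hk : ∀ i, 0 ≤ k i) {z : Fin m → ℝ} {M : ℝ} (hM : 1 ≤ M)
    (hz : ∀ j, 0 ≤ z j) (hzM : ∀ j, z j ≤ M) (l : Fin m) :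
    -((∑ i, (a i l : ℝ) * k i * M ^ ∑ j, a i j) * z l) ≤ (Gamma a b *ᵥ rate a k z) l := by
  rw [Gamma_mulVec_apply, Finset.sum_mul, ← Finset.sum_neg_distrib]
  refine Finset.sum_le_sum fun i _ => ?_
  have hconsumed : (a i l : ℝ) * rate a k z i ≤ a i l * k i * M ^ (∑ j, a i j) * z l := by
    rcases Nat.eq_zero_or_pos (a i l) with h | h
    · simp [h]
    · calc (a i l : ℝ) * rate a k z i ≤ a i l * (k i * (z l * M ^ ∑ j, a i j)) := by
            unfold rate
            gcongr
            exacts [hk i, prod_pow_le_mul_pow hM hz hzM h]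
        _ = _ := by ring
  have hproduced : 0 ≤ (b i l : ℝ) * rate a k z i :=
    mul_nonneg (Nat.cast_nonneg _) (rate_nonneg hk hz i)
  rw [sub_mul]
  linarith

lemma Gamma_mulVec_rate_pos_of_produced (hk : ∀ i, 0 < k i) {y : Fin m → ℝ}
    (hy : ∀ j, 0 ≤ y j) {j : Fin m} (hyj : y j = 0) {i₀ : Fin r} (hprod : 0 < b i₀ j)
    (hcons : ∀ l, y l = 0 → a i₀ l = 0) : 0 < (Gamma a b *ᵥ rate a k y) j := by
  have hterm : ∀ i, ((b i j : ℝ) - a i j) * rate a k y i = b i j * rate a k y i := by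
    intro i
    rcases Nat.eq_zero_or_pos (a i j) with h | h
    · simp [h]
    · simp [rate_eq_zero_of_consumed hyj h]
  rw [Gamma_mulVec_apply]
  simp_rw [hterm]
  exact Finset.sum_pos' (fun i _ => mul_nonneg (Nat.cast_nonneg _)
      (rate_nonneg (fun i => (hk i).le) hy i))
    ⟨i₀, Finset.mem_univ _, mul_pos (by exact_mod_cast hprod) (rate_pos hk hy hcons)⟩

end MassAction

section OmegaLimit

variable {m : ℕ} {x : ℝ → Fin m → ℝ}

lemma omegaLimitSet_subset_of_eventually_mem {F : Set (Fin m → ℝ)} (hF : IsClosed F)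
    (h : ∀ᶠ t in atTop, x t ∈ F) : omegaLimitSet x ⊆ F :=
  fun _ hy => hF.mem_of_mapClusterPt hy h

lemma exists_ge_mem_of_mem_omegaLimitSet {y : Fin m → ℝ} (hy : y ∈ omegaLimitSet x)
    {s : Set (Fin m → ℝ)} (hs : s ∈ 𝓝 y) (T : ℝ) : ∃ t ≥ T, x t ∈ s :=
  frequently_atTop.1 (mapClusterPt_iff_frequently.1 hy s hs) T

lemma nonneg_of_mem_omegaLimitSet (hnn : ∀ t ≥ 0, ∀ l, 0 ≤ x t l) {z : Fin m → ℝ}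
    (hz : z ∈ omegaLimitSet x) (l : Fin m) : 0 ≤ z l :=
  omegaLimitSet_subset_of_eventually_mem (isClosed_le continuous_const (continuous_apply l))
    ((eventually_ge_atTop 0).mono fun t ht => hnn t ht l) hz

lemma eventually_mem_closure_image : ∀ᶠ t in atTop, x t ∈ closure (x '' Ici 0) :=
  (eventually_ge_atTop 0).mono fun _ ht => subset_closure (mem_image_of_mem x ht)

lemma isCompact_omegaLimitSet (hbdd : Bornology.IsBounded (x '' Ici 0)) :
    IsCompact (omegaLimitSet x) :=
  hbdd.isCompact_closure.of_isClosed_subset isClosed_setOfPred_clusterPt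
    (omegaLimitSet_subset_of_eventually_mem isClosed_closure eventually_mem_closure_image)

lemma eventually_mem_of_omegaLimitSet_subset (hbdd : Bornology.IsBounded (x '' Ici 0))
    {O : Set (Fin m → ℝ)} (hO : IsOpen O) (hsub : omegaLimitSet x ⊆ O) :
    ∀ᶠ t in atTop, x t ∈ O := by
  by_contra h
  have hne : (map x atTop ⊓ 𝓟 Oᶜ).NeBot := frequently_iff_neBot.1 (not_eventually.1 h)
  have hle : map x atTop ⊓ 𝓟 Oᶜ ≤ 𝓟 (closure (x '' Ici 0) ∩ Oᶜ) := by
    rw [← inf_principal]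
    exact inf_le_inf_right _ (le_principal_iff.2 (mem_map.2 eventually_mem_closure_image))
  obtain ⟨z, hz, hcluster⟩ := (hbdd.isCompact_closure.inter_right hO.isClosed_compl) hle
  exact hz.2 (hsub (hcluster.mono inf_le_left))

end OmegaLimit

section Dynamics

lemma pos_of_neg_mul_le_deriv {ι : Type*} [Fintype ι] {x v : ℝ → ι → ℝ} {C : ι → ℝ}
    (hx : ∀ t ≥ 0, HasDerivAt x (v t) t) (hx0 : ∀ l, 0 < x 0 l)
    (hv : ∀ t ≥ 0, (∀ l, 0 ≤ x t l) → ∀ l, -(C l * x t l) ≤ v t l) {T : ℝ} (hT : 0 ≤ T)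
    (l : ι) : 0 < x T l := by
  by_contra! hle
  have hcont : ContinuousOn x (Icc 0 T) := fun t ht =>
    (hx t ht.1).continuousAt.continuousWithinAt
  -- the first time at which some coordinate is nonpositive
  set Z := Icc 0 T ∩ ⋃ l, (fun t => x t l) ⁻¹' Iic 0
  have hZ : IsClosed Z := by
    simp only [Z, inter_iUnion]
    exact isClosed_iUnion_of_finite fun l => ((continuous_apply l).comp_continuousOn hcont)
      |>.preimage_isClosed_of_isClosed isClosed_Icc isClosed_Iic
  have hZbdd : BddBelow Z := ⟨0, fun t ht => ht.1.1⟩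
  have hτ : sInf Z ∈ Z := hZ.csInf_mem ⟨T, ⟨hT, le_rfl⟩, mem_iUnion.2 ⟨l, hle⟩⟩ hZbdd
  set τ := sInf Z
  obtain ⟨⟨hτ0, hτT⟩, hτl⟩ := hτ
  obtain ⟨l', hl' : x τ l' ≤ 0⟩ := mem_iUnion.1 hτl
  have hpos : ∀ t ∈ Ico 0 τ, ∀ l, 0 < x t l := fun t ht l => by
    by_contra! h
    exact (csInf_le hZbdd ⟨⟨ht.1, ht.2.le.trans hτT⟩, mem_iUnion.2 ⟨l, h⟩⟩).not_gt ht.2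
  have hgronwall := le_gronwallBound_of_liminf_deriv_right_le (f := fun t => -x t l')
    (f' := fun t => -v t l') (K := -C l') (ε := 0)
    ((continuous_apply l').comp_continuousOn (hcont.mono (Icc_subset_Icc_right hτT))).neg
    (fun t ht r hr =>
      ((hasDerivAt_pi.1 (hx t ht.1) l').neg.hasDerivWithinAt).liminf_right_slope_le hr)
    le_rfl (fun t ht => by linarith [hv t ht.1 (fun l => (hpos t ht l).le) l']) τ ⟨hτ0, le_rfl⟩
  rw [gronwallBound_ε0] at hgronwall
  nlinarith [hx0 l', Real.exp_pos (-C l' * (τ - 0))]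

lemma dist_le_mul_of_norm_deriv_le {E : Type*} [NormedAddCommGroup E] [NormedSpace ℝ E]
    {x v : ℝ → E} {C : ℝ} (hx : ∀ t ≥ 0, HasDerivAt x (v t) t) (hv : ∀ t ≥ 0, ‖v t‖ ≤ C)
    {s t : ℝ} (hs : 0 ≤ s) (hst : s ≤ t) : dist (x s) (x t) ≤ C * (t - s) := by
  rw [dist_comm, dist_eq_norm]
  exact norm_image_sub_le_of_norm_deriv_le_segment'
    (fun u hu => (hx u (hs.trans hu.1)).hasDerivWithinAt) (fun u hu => hv u (hs.trans hu.1))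
    t (right_mem_Icc.2 hst)

lemma notMem_omegaLimitSet_of_le_deriv_apply {m : ℕ} {x v : ℝ → Fin m → ℝ} {C c : ℝ}
    {j : Fin m} {y : Fin m → ℝ} {W : Set (Fin m → ℝ)}
    (hx : ∀ t ≥ 0, HasDerivAt x (v t) t) (hv : ∀ t ≥ 0, ‖v t‖ ≤ C)
    (hxj : ∀ t ≥ 0, 0 ≤ x t j) (hyj : y j = 0) (hW : W ∈ 𝓝 y) (hc : 0 < c)
    (hdrift : ∀ t ≥ 0, x t ∈ W → c ≤ v t j) : y ∉ omegaLimitSet x := by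
  intro hy
  obtain ⟨δ, hδ, hball⟩ := Metric.mem_nhds_iff.1 hW
  set L := max C 1
  have hL : 0 < L := lt_max_of_lt_right one_pos
  -- during a time `h` before reaching `ball y (δ / 2)` the trajectory stays in `ball y δ`
  set h := δ / (2 * L)
  have hh : 0 < h := by positivity
  have hLh : L * h = δ / 2 := by simp only [h]; field_simp
  obtain ⟨t, ht, hty⟩ := exists_ge_mem_of_mem_omegaLimitSet hy
    (ball_mem_nhds y (lt_min (half_pos hδ) (mul_pos hc hh))) h
  obtain ⟨hty₁, hty₂⟩ := lt_min_iff.1 (mem_ball.1 hty)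
  have hnear : ∀ s ∈ Icc (t - h) t, x s ∈ W := fun s hs => hball <| calc
    dist (x s) y ≤ dist (x s) (x t) + dist (x t) y := dist_triangle _ _ _
    _ < L * h + δ / 2 := by
        refine add_lt_add_of_le_of_lt ?_ hty₁
        refine (dist_le_mul_of_norm_deriv_le hx (fun u hu => (hv u hu).trans (le_max_left C 1))
          (by linarith [hs.1]) hs.2).trans ?_
        exact mul_le_mul_of_nonneg_left (by linarith [hs.1]) hL.le
    _ = δ := by rw [hLh]; ring
  have hgrow : c * (t - (t - h)) ≤ x t j - x (t - h) j := by
    have hderiv : ∀ s ∈ Icc (t - h) t, HasDerivAt (fun u => x u j) (v s j) s :=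
      fun s hs => hasDerivAt_pi.1 (hx s (by linarith [hs.1])) j
    refine (convex_Icc (t - h) t).mul_sub_le_image_sub_of_le_deriv
      (fun s hs => (hderiv s hs).continuousAt.continuousWithinAt)
      (fun s hs => (hderiv s (interior_subset hs)).differentiableAt.differentiableWithinAt)
      (fun s hs => ?_) _ (left_mem_Icc.2 (by linarith)) _ (right_mem_Icc.2 (by linarith))
      (by linarith)
    rw [interior_Icc] at hs
    rw [(hderiv s (Ioo_subset_Icc_self hs)).deriv]
    exact hdrift s (by linarith [hs.1]) (hnear s (Ioo_subset_Icc_self hs))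
  have hxtj : x t j < c * h := by
    have := dist_le_pi_dist (x t) y j
    rw [hyj, Real.dist_eq, sub_zero] at this
    linarith [le_abs_self (x t j)]
  linarith [hxj (t - h) (by linarith)]

lemma le_of_deriv_nonpos_above {g g' : ℝ → ℝ} {a b c : ℝ} (hab : a ≤ b)
    (hg : ∀ t ∈ Icc a b, HasDerivAt g (g' t) t) (hga : g a ≤ c)
    (hg' : ∀ t ∈ Icc a b, c < g t → g' t ≤ 0) : g b ≤ c := by
  refine le_of_forall_pos_le_add fun ε hε => ?_
  -- fence `g` by lines of slope `δ > 0` starting strictly above `c`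
  set δ := ε / (b - a + 1)
  have hδ : 0 < δ := div_pos hε (by linarith)
  have hline : ∀ t, HasDerivAt (fun t => c + δ * (t - a + 1)) δ t := fun t => by
    simpa using (((hasDerivAt_id t).sub_const a).add_const 1).const_mul δ |>.const_add c
  have hfence := image_le_of_deriv_right_lt_deriv_boundary
    (fun t ht => (hg t ht).continuousAt.continuousWithinAt)
    (fun t ht => (hg t (Ico_subset_Icc_self ht)).hasDerivWithinAt) (by nlinarith) hline
    (fun t ht heq => (hg' t (Ico_subset_Icc_self ht) (by rw [heq]; nlinarith [ht.1])).trans_lt hδ)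
    (right_mem_Icc.2 hab)
  calc g b ≤ c + δ * (b - a + 1) := hfence
    _ = c + ε := by rw [div_mul_cancel₀ ε (by linarith)]

lemma neg_of_mem_omegaLimitSet_of_lyapunov {m : ℕ} {x : ℝ → Fin m → ℝ}
    (hbdd : Bornology.IsBounded (x '' Ici 0)) {V : (Fin m → ℝ) → ℝ} (hV : Continuous V)
    {w : ℝ → ℝ} (hVx : ∀ t ≥ 0, HasDerivAt (fun s => V (x s)) (w t) t) {U : Set (Fin m → ℝ)}
    (hU : IsOpen U) (hw : ∀ t ≥ 0, x t ∈ U → w t ≤ 0) (htraj : ∀ t ≥ 0, V (x t) < 0)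
    (hout : ∀ z ∈ omegaLimitSet x \ U, V z < 0) {y : Fin m → ℝ} (hy : y ∈ omegaLimitSet x) :
    V y < 0 := by
  obtain ⟨c, hc0, hc⟩ : ∃ c < 0, ∀ z ∈ omegaLimitSet x \ U, V z < c := by
    rcases (omegaLimitSet x \ U).eq_empty_or_nonempty with h | h
    · exact ⟨-1, by norm_num, by simp [h]⟩
    · obtain ⟨z₀, hz₀, hmax⟩ :=
        ((isCompact_omegaLimitSet hbdd).diff hU).exists_isMaxOn h hV.continuousOn
      have := hout z₀ hz₀
      exact ⟨V z₀ / 2, by linarith, fun z hz => by linarith [show V z ≤ V z₀ from hmax hz]⟩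
  have hcover : omegaLimitSet x ⊆ U ∪ {z | V z < c} := fun z hz =>
    (em (z ∈ U)).imp id fun hzU => hc z ⟨hz, hzU⟩
  obtain ⟨T, hT⟩ := eventually_atTop.1 ((eventually_mem_of_omegaLimitSet_subset hbdd
    (hU.union (isOpen_lt hV continuous_const)) hcover).and (eventually_ge_atTop 0))
  -- once in `U ∪ {V < c}`, the trajectory cannot cross the level `L ≥ c` upwards
  set L := max c (V (x T))
  have htrap : ∀ t ≥ T, V (x t) ≤ L := fun t ht =>
    le_of_deriv_nonpos_above ht (fun s hs => hVx s (hT s hs.1).2) (le_max_right _ _)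
      fun s hs hlt => hw s (hT s hs.1).2 <| (hT s hs.1).1.resolve_right fun h =>
        (lt_asymm hlt (h.trans_le (le_max_left _ _)))
  have hyL : V y ≤ L := omegaLimitSet_subset_of_eventually_mem
    (isClosed_le hV continuous_const) (eventually_atTop.2 ⟨T, htrap⟩) hy
  exact hyL.trans_lt (max_lt hc0 (htraj T (hT T le_rfl).2))

end Dynamics

lemma sum_mul_neg_iff_exists_ne_zero {ι : Type*} [Fintype ι] {I : Set ι} {α z : ι → ℝ}
    (hαI : ∀ i ∈ I, α i < 0) (hα0 : ∀ i ∉ I, α i = 0) (hz : ∀ i, 0 ≤ z i) :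
    ∑ i, α i * z i < 0 ↔ ∃ i ∈ I, z i ≠ 0 := by
  have hterm : ∀ i ∈ Finset.univ, α i * z i ≤ 0 := fun i _ => by
    by_cases hi : i ∈ I
    · exact mul_nonpos_of_nonpos_of_nonneg (hαI i hi).le (hz i)
    · simp [hα0 i hi]
  have hzero : ∀ i, α i * z i = 0 ↔ (i ∈ I → z i = 0) := fun i => by
    by_cases hi : i ∈ I
    · simp [hi, (hαI i hi).ne]
    · simp [hi, hα0 i hi]
  rw [(Finset.sum_nonpos hterm).lt_iff_ne, Ne, Finset.sum_eq_zero_iff_of_nonpos hterm]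
  simp [hzero]

lemma exists_mem_posBoundary_forall_mem_LI {m : ℕ} {S : Set (Fin m → ℝ)}
    (hS : (S ∩ posBoundary m).Nonempty) :
    ∃ y ∈ S ∩ posBoundary m, ∀ z ∈ S, (∀ l, 0 ≤ z l) → (∀ i, y i = 0 → z i = 0) →
      z ∈ LI {i | y i = 0} := by
  obtain ⟨y, ⟨hyS, hy0, i₀, hi₀⟩, hmax⟩ :=
    Set.Finite.exists_maximalFor' (fun y => {i | y i = 0}) _ (Set.toFinite _) hS
  refine ⟨y, ⟨hyS, hy0, i₀, hi₀⟩, fun z hzS hz0 hyz => ⟨hz0, hyz, fun l hl => ?_⟩⟩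
  refine (hz0 l).lt_of_ne fun hzl => hl ?_
  exact hmax ⟨hzS, hz0, i₀, hyz i₀ hi₀⟩ (fun i hi => hyz i hi) hzl.symm

section MassActionDynamics

variable {m r : ℕ} {a b : Fin r → Fin m → ℕ} {k : Fin r → ℝ} {x : ℝ → Fin m → ℝ}

lemma IsForwardSolution.pos (hk : ∀ i, 0 < k i) (hsol : IsForwardSolution a b k x)
    (hx0 : ∀ l, 0 < x 0 l) (hbdd : Bornology.IsBounded (x '' Ici 0)) {t : ℝ} (ht : 0 ≤ t)
    (l : Fin m) : 0 < x t l := by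
  obtain ⟨B, hB⟩ := isBounded_iff_forall_norm_le.1 hbdd
  have hxM : ∀ t ≥ 0, ∀ j, x t j ≤ max 1 B := fun t ht j =>
    calc x t j ≤ ‖x t‖ := (Real.le_norm_self _).trans (norm_le_pi_norm (x t) j)
      _ ≤ max 1 B := (hB _ (mem_image_of_mem x ht)).trans (le_max_right _ _)
  exact pos_of_neg_mul_le_deriv (C := fun l => ∑ i, (a i l : ℝ) * k i * max 1 B ^ ∑ j, a i j)
    hsol hx0 (fun t ht hnn => neg_mul_le_Gamma_mulVec_rate b (fun i => (hk i).le)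
      (le_max_left _ _) hnn (hxM t ht)) ht l

lemma IsForwardSolution.isSemiLocking_zeroSet (hk : ∀ i, 0 < k i)
    (hsol : IsForwardSolution a b k x) (hnn : ∀ t ≥ 0, ∀ l, 0 ≤ x t l)
    (hbdd : Bornology.IsBounded (x '' Ici 0)) {y : Fin m → ℝ} (hy : y ∈ omegaLimitSet x)
    (hy0 : ∀ l, 0 ≤ y l) (hyI : {i | y i = 0}.Nonempty) : IsSemiLocking a b {i | y i = 0} := by
  refine ⟨hyI, fun i₀ ⟨j, hyj, hprod⟩ => ?_⟩
  by_contra! hcons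
  set f := fun z => Gamma a b *ᵥ rate a k z
  have hf : Continuous f := continuous_Gamma_mulVec_rate a b k
  have hfy : 0 < f y j := Gamma_mulVec_rate_pos_of_produced b hk hy0 hyj hprod
    fun l hl => Nat.le_zero.1 (hcons l hl)
  -- near `y` species `j` is produced at a positive rate, so `y j = 0` cannot be approached
  obtain ⟨C, hC⟩ := hbdd.isCompact_closure.exists_bound_of_continuousOn hf.continuousOn
  exact notMem_omegaLimitSet_of_le_deriv_apply (W := {z | f y j / 2 < f z j}) hsol
    (fun t ht => hC _ (subset_closure (mem_image_of_mem x ht))) (fun t ht => hnn t ht j) hyj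
    ((isOpen_lt continuous_const ((continuous_apply j).comp hf)).mem_nhds (half_lt_self hfy))
    (half_pos hfy) (fun _ _ h => h.le) hy

lemma IsForwardSolution.exists_ne_zero_of_lyapunov (hsol : IsForwardSolution a b k x)
    (hpos : ∀ t ≥ 0, ∀ l, 0 < x t l) (hbdd : Bornology.IsBounded (x '' Ici 0))
    {I : Set (Fin m)} (hI : I.Nonempty) {α : Fin m → ℝ} (hαI : ∀ i ∈ I, α i < 0)
    (hα0 : ∀ i ∉ I, α i = 0) {U : Set (Fin m → ℝ)} (hU : IsOpen U)
    (hMU : omegaLimitSet x ∩ {z | ∀ i ∈ I, z i = 0} ⊆ U)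
    (hUα : ∀ z ∈ U, (∀ l, 0 ≤ z l) → ∑ i, α i * (Gamma a b *ᵥ rate a k z) i ≤ 0)
    {y : Fin m → ℝ} (hy : y ∈ omegaLimitSet x) : ∃ i ∈ I, y i ≠ 0 := by
  have hnn : ∀ t ≥ 0, ∀ l, 0 ≤ x t l := fun t ht l => (hpos t ht l).le
  have hΩ := fun z (hz : z ∈ omegaLimitSet x) => nonneg_of_mem_omegaLimitSet hnn hz
  obtain ⟨i₀, hi₀⟩ := hI
  refine (sum_mul_neg_iff_exists_ne_zero hαI hα0 (hΩ y hy)).1 ?_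
  refine neg_of_mem_omegaLimitSet_of_lyapunov hbdd (V := fun z => ∑ i, α i * z i)
    (continuous_finsetSum _ fun i _ => continuous_const.mul (continuous_apply i))
    (fun t ht => HasDerivAt.fun_sum fun i _ => (hasDerivAt_pi.1 (hsol t ht) i).const_mul (α i))
    hU (fun t ht hxU => hUα _ hxU (hnn t ht))
    (fun t ht => (sum_mul_neg_iff_exists_ne_zero hαI hα0 (hnn t ht)).2
      ⟨i₀, hi₀, (hpos t ht i₀).ne'⟩)
    (fun z ⟨hzΩ, hzU⟩ => (sum_mul_neg_iff_exists_ne_zero hαI hα0 (hΩ z hzΩ)).2 ?_) hy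
  by_contra! h
  exact hzU (hMU ⟨hzΩ, h⟩)

end MassActionDynamics

/-- a mass-action system with bounded forward solutions is persistent provided,
for every semi-locking set `I`, there is `α` negative on `I` and zero off `I` with
`⟨α, Γ R(x)⟩ ≤ 0` in a neighbourhood (in `ℝ^m_{≥0}`) of every compact subset of `L_I`. -/
theorem stmt5 {m r : ℕ} (a b : Fin r → Fin m → ℕ) (k : Fin r → ℝ) (hk : ∀ i, 0 < k i)
    (hbd : ∀ x₀ : Fin m → ℝ, (∀ i, 0 < x₀ i) → ∀ x : ℝ → Fin m → ℝ, x 0 = x₀ →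
      IsForwardSolution a b k x → Bornology.IsBounded (x '' Set.Ici (0:ℝ)))
    (hα : ∀ I : Set (Fin m), IsSemiLocking a b I → ∃ α : Fin m → ℝ,
      (∀ i ∈ I, α i < 0) ∧ (∀ i ∉ I, α i = 0) ∧
      ∀ K : Set (Fin m → ℝ), IsCompact K → K ⊆ LI I →
        ∃ U : Set (Fin m → ℝ), IsOpen U ∧ K ⊆ U ∧ ∀ x ∈ U, (∀ l, 0 ≤ x l) →
          ∑ i, α i * ((Gamma a b).mulVec (rate a k x)) i ≤ 0) :
    ∀ x₀ : Fin m → ℝ, (∀ i, 0 < x₀ i) → ∀ x : ℝ → Fin m → ℝ, x 0 = x₀ →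
      IsForwardSolution a b k x → omegaLimitSet x ∩ posBoundary m = ∅ := by
  intro x₀ hx₀ x hx0 hsol
  have hbdd := hbd x₀ hx₀ x hx0 hsol
  have hpos : ∀ t ≥ 0, ∀ l, 0 < x t l := fun t ht => hsol.pos hk (hx0 ▸ hx₀) hbdd ht
  have hΩ := fun z (hz : z ∈ omegaLimitSet x) =>
    nonneg_of_mem_omegaLimitSet (fun t ht l => (hpos t ht l).le) hz
  refine eq_empty_iff_forall_notMem.2 fun y₀ hy₀ => ?_
  -- a boundary ω-limit point `y` whose zero set `I` is maximal
  obtain ⟨y, ⟨hyΩ, -, i₀, hi₀⟩, hmax⟩ := exists_mem_posBoundary_forall_mem_LI ⟨y₀, hy₀⟩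
  set I := {i | y i = 0}
  obtain ⟨α, hαI, hα0, hαK⟩ := hα I (hsol.isSemiLocking_zeroSet hk
    (fun t ht l => (hpos t ht l).le) hbdd hyΩ (hΩ y hyΩ) ⟨i₀, hi₀⟩)
  set M := omegaLimitSet x ∩ {z | ∀ i ∈ I, z i = 0}
  have hM : IsCompact M := (isCompact_omegaLimitSet hbdd).inter_right <| by
    simp only [ofPred_forall]
    exact isClosed_biInter fun i _ => isClosed_eq (continuous_apply i) continuous_const
  obtain ⟨U, hU, hMU, hUα⟩ := hαK M hM fun z hz => hmax z hz.1 (hΩ z hz.1) hz.2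
  obtain ⟨i, hi, hyi⟩ :=
    hsol.exists_ne_zero_of_lyapunov hpos hbdd ⟨i₀, hi₀⟩ hαI hα0 hU hMU hUα hyΩ
  exact hyi hi
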